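/- (Hörmander condition, general case) Let 𝔤 be the smallest ℝ-linear subspace of the space of smooth vector fields on ℝ^N that contains D_0, D_1, …, D_n and is closed under the Lie bracket operation. Then for every φ ∈ ℝ^N, the set of vectors {W(φ) : W ∈ 𝔤} spans all of ℝ^N. -/

import Mathlib

open scoped BigOperators

noncomputable section

/-- Vector fields on `ℝ^N`. -/
abbrev VF (N : ℕ) := (Fin N → ℝ) → Fin N → ℝ

/-- The Lie bracket `[V,W](φ) = DW(φ)(V(φ)) − DV(φ)(W(φ))` of vector fields. -/
def lieBracket {N : ℕ} (V W : VF N) : VF N :=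
  fun φ => fderiv ℝ W φ (V φ) - fderiv ℝ V φ (W φ)

/-- The drift vector field `D₀`. -/
def Dfield0 {N : ℕ} (lam μ : ℝ) (k : ℕ) : VF N :=
  fun φ i => (lam - (k : ℝ) * μ ^ 2 / 2) * φ i + lam

/-- The diffusion vector fields `D_j`, `1 ≤ j ≤ n`. -/
def DfieldJ {n N : ℕ} (μ : ℝ) (S : Fin N → Finset (Fin n)) (j : Fin n) : VF N :=
  fun φ i => (μ / Real.sqrt 2) * (φ i * if j ∈ S i then 1 else 0)

/-- The drift vector field `D₀` in the general case, whose `i`-th coefficient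
involves the cardinality of `S i`. -/
def DfieldGen0 {n N : ℕ} (lam μ : ℝ) (S : Fin N → Finset (Fin n)) : VF N :=
  fun φ i => (lam - ((S i).card : ℝ) * μ ^ 2 / 2) * φ i + lam

/-! Since `D₀` and the `D_j` are affine with diagonal linear parts, their brackets are constant
fields: `[D_j, D₀] = -(λμ/√2) e_j` with `e_j = (1_{j ∈ S_i})_i`, and `[v, D_j] = (μ/√2) e_j v` for a
constant field `v`. So the constant fields of the Lie algebra contain every `e_j` and are stable
under multiplication by the algebra generated by the `e_j`. As the `S_i` are distinct and
nonempty, for `j ∈ S_{i₀}` the basis vector `δ_{i₀}` equals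
`e_j · ∏_{u ∈ S_{i₀}} e_u · ∏_{u ∉ S_{i₀}} (1 - e_u)`. -/

theorem mul_mem_of_mem_adjoin {R A : Type*} [CommSemiring R] [Semiring A] [Algebra R A]
    {s C : Set A} (hadd : ∀ x ∈ C, ∀ y ∈ C, x + y ∈ C) (hsmul : ∀ (r : R), ∀ x ∈ C, r • x ∈ C)
    (hs : ∀ a ∈ s, ∀ x ∈ C, a * x ∈ C) {w : A} (hw : w ∈ Algebra.adjoin R s) :
    ∀ x ∈ C, w * x ∈ C := by
  induction hw using Algebra.adjoin_induction with
  | mem a ha => exact hs a ha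
  | algebraMap r =>
    intro x hx
    rw [Algebra.algebraMap_eq_smul_one, smul_one_mul]
    exact hsmul r x hx
  | add w₁ w₂ _ _ ih₁ ih₂ =>
    intro x hx
    rw [add_mul]
    exact hadd _ (ih₁ x hx) _ (ih₂ x hx)
  | mul w₁ w₂ _ _ ih₁ ih₂ =>
    intro x hx
    rw [mul_assoc]
    exact ih₁ _ (ih₂ x hx)

namespace Hormander

variable {n N : ℕ}

theorem lieBracket_mul_add (a b u v : Fin N → ℝ) :
    lieBracket (fun φ => a * φ + u) (fun φ => b * φ + v) = fun _ => b * u - a * v := by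
  have hderiv (c w φ : Fin N → ℝ) :
      fderiv ℝ (fun ψ => c * ψ + w) φ = ContinuousLinearMap.mul ℝ (Fin N → ℝ) c :=
    ((ContinuousLinearMap.mul ℝ (Fin N → ℝ) c).hasFDerivAt.add_const w).fderiv
  funext φ
  simp only [lieBracket, hderiv, ContinuousLinearMap.mul_apply']
  ring

def incidence (S : Fin N → Finset (Fin n)) (j : Fin n) : Fin N → ℝ :=
  fun i => if j ∈ S i then 1 else 0

theorem dfieldGen0_eq (lam μ : ℝ) (S : Fin N → Finset (Fin n)) :
    DfieldGen0 lam μ S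
      = fun φ => (fun i => lam - ((S i).card : ℝ) * μ ^ 2 / 2) * φ + fun _ => lam :=
  rfl

theorem dfieldJ_eq (μ : ℝ) (S : Fin N → Finset (Fin n)) (j : Fin n) :
    DfieldJ μ S j = fun φ => (μ / √2) • incidence S j * φ + 0 := by
  funext φ i
  simp [DfieldJ, incidence]

theorem lieBracket_dfieldJ_dfieldGen0 (lam μ : ℝ) (S : Fin N → Finset (Fin n)) (j : Fin n) :
    lieBracket (DfieldJ μ S j) (DfieldGen0 lam μ S)
      = fun _ => (-(lam * (μ / √2))) • incidence S j := by
  rw [dfieldJ_eq, dfieldGen0_eq, lieBracket_mul_add]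
  funext φ i
  simp only [Pi.sub_apply, Pi.mul_apply, Pi.smul_apply, Pi.zero_apply, smul_eq_mul]
  ring

theorem lieBracket_const_dfieldJ (μ : ℝ) (S : Fin N → Finset (Fin n)) (j : Fin n)
    (v : Fin N → ℝ) :
    lieBracket (fun _ => v) (DfieldJ μ S j) = fun _ => (μ / √2) • (incidence S j * v) := by
  have := lieBracket_mul_add 0 ((μ / √2) • incidence S j) v 0
  simp only [zero_mul, zero_add, mul_zero, sub_zero] at this
  rw [dfieldJ_eq, this, smul_mul_assoc]

theorem prod_incidence_mul_prod_one_sub_incidence {S : Fin N → Finset (Fin n)}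
    (hS : Function.Injective S) (i₀ : Fin N) :
    (∏ u ∈ S i₀, incidence S u) * ∏ u ∈ (S i₀)ᶜ, (1 - incidence S u) = Pi.single i₀ 1 := by
  funext i
  have hcompl (u : Fin n) : (1 - incidence S u) i = if u ∉ S i then 1 else 0 := by
    by_cases hu : u ∈ S i <;> simp [incidence, hu]
  simp only [Pi.mul_apply, Finset.prod_apply, hcompl, incidence, Finset.prod_boole,
    Finset.mem_compl, not_imp_not, ← Finset.subset_iff, boole_mul, ← ite_and,
    ← Finset.Subset.antisymm_iff, hS.eq_iff, @eq_comm _ i₀, Pi.single_apply]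

structure IsLieClosed (G : Set (VF N)) : Prop where
  add_mem : ∀ V ∈ G, ∀ W ∈ G, V + W ∈ G
  smul_mem : ∀ (a : ℝ), ∀ V ∈ G, a • V ∈ G
  lieBracket_mem : ∀ V ∈ G, ∀ W ∈ G, lieBracket V W ∈ G

section IsLieClosed

variable {G : Set (VF N)} {lam μ : ℝ} {S : Fin N → Finset (Fin n)}

theorem IsLieClosed.const_incidence_mem (hG : IsLieClosed G) (hμ : μ ≠ 0) (hlam : lam ≠ 0)
    (h₀ : DfieldGen0 lam μ S ∈ G) {j : Fin n} (hj : DfieldJ μ S j ∈ G) :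
    (fun _ => incidence S j) ∈ G := by
  have hc : -(lam * (μ / √2)) ≠ 0 := by simp [hμ, hlam]
  have h := hG.smul_mem (-(lam * (μ / √2)))⁻¹ _ (hG.lieBracket_mem _ hj _ h₀)
  convert h using 1
  rw [lieBracket_dfieldJ_dfieldGen0]
  funext φ
  rw [Pi.smul_apply, smul_smul, inv_mul_cancel₀ hc, one_smul]

theorem IsLieClosed.const_incidence_mul_mem (hG : IsLieClosed G) (hμ : μ ≠ 0) {j : Fin n}
    (hj : DfieldJ μ S j ∈ G) {v : Fin N → ℝ} (hv : (fun _ => v) ∈ G) :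
    (fun _ => incidence S j * v) ∈ G := by
  have hc : μ / √2 ≠ 0 := by simp [hμ]
  have h := hG.smul_mem (μ / √2)⁻¹ _ (hG.lieBracket_mem _ hv _ hj)
  convert h using 1
  rw [lieBracket_const_dfieldJ]
  funext φ
  rw [Pi.smul_apply, smul_smul, inv_mul_cancel₀ hc, one_smul]

theorem IsLieClosed.const_mul_mem_of_mem_adjoin (hG : IsLieClosed G) (hμ : μ ≠ 0)
    (hJ : ∀ j, DfieldJ μ S j ∈ G) {w : Fin N → ℝ}
    (hw : w ∈ Algebra.adjoin ℝ (Set.range (incidence S))) {v : Fin N → ℝ}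
    (hv : (fun _ => v) ∈ G) : (fun _ => w * v) ∈ G :=
  mul_mem_of_mem_adjoin (C := {v | (fun _ => v) ∈ G})
    (fun _ hx _ hy => hG.add_mem _ hx _ hy) (fun r _ hx => hG.smul_mem r _ hx)
    (by rintro _ ⟨j, rfl⟩ _ hx; exact hG.const_incidence_mul_mem hμ (hJ j) hx) hw v hv

theorem IsLieClosed.const_single_mem (hG : IsLieClosed G) (hμ : μ ≠ 0) (hlam : lam ≠ 0)
    (hS : Function.Injective S) (hSne : ∀ i, (S i).Nonempty)
    (h₀ : DfieldGen0 lam μ S ∈ G) (hJ : ∀ j, DfieldJ μ S j ∈ G) (i₀ : Fin N) :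
    (fun _ => Pi.single i₀ 1) ∈ G := by
  obtain ⟨j, hj⟩ := hSne i₀
  -- The factor `incidence S j` makes the product below start from a constant field of `G`;
  -- the constant field `1` itself need not lie in `G`.
  have hgen {u : Fin n} : incidence S u ∈ Algebra.adjoin ℝ (Set.range (incidence S)) :=
    Algebra.subset_adjoin ⟨u, rfl⟩
  have hsingle : Pi.single i₀ 1 = Pi.single i₀ 1 * incidence S j := by
    funext i
    by_cases hi : i = i₀
    · subst hi
      simp [incidence, hj]
    · simp [hi]
  rw [hsingle, ← prod_incidence_mul_prod_one_sub_incidence hS]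
  refine hG.const_mul_mem_of_mem_adjoin hμ hJ ?_ (hG.const_incidence_mem hμ hlam h₀ (hJ j))
  exact Subalgebra.mul_mem _ (Subalgebra.prod_mem _ fun u _ => hgen)
    (Subalgebra.prod_mem _ fun u _ => Subalgebra.sub_mem _ (Subalgebra.one_mem _) hgen)

end IsLieClosed

end Hormander

open Hormander in
theorem hormander_condition_general_case_general
    (n N : ℕ)
    (S : Fin N → Finset (Fin n)) (hSinj : Function.Injective S)
    (hSne : ∀ i, (S i).Nonempty)
    (μ lam : ℝ) (hμ : μ ≠ 0) (hlam : 0 < lam) :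
    ∀ φ : Fin N → ℝ,
      Submodule.span ℝ ((fun W : VF N => W φ) ''
        (⋂₀ {G : Set (VF N) |
          (∀ W ∈ G, ContDiff ℝ (⊤ : ℕ∞) W) ∧
          DfieldGen0 lam μ S ∈ G ∧ (∀ j : Fin n, DfieldJ μ S j ∈ G) ∧
          (∀ V ∈ G, ∀ W ∈ G, V + W ∈ G) ∧
          (∀ (a : ℝ), ∀ V ∈ G, a • V ∈ G) ∧
          (∀ V ∈ G, ∀ W ∈ G, lieBracket V W ∈ G)})) = ⊤ := by
  intro φ
  rw [eq_top_iff, ← (Pi.basisFun ℝ (Fin N)).span_eq, Submodule.span_le]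
  rintro _ ⟨i, rfl⟩
  refine Submodule.subset_span ⟨fun _ => Pi.single i 1, ?_, by simp⟩
  rintro G ⟨-, h₀, hJ, hadd, hsmul, hbr⟩
  exact IsLieClosed.const_single_mem ⟨hadd, hsmul, hbr⟩ hμ hlam.ne' hSinj hSne h₀ hJ i

theorem hormander_condition_general_case
    (n N : ℕ) (hn : 2 ≤ n)
    (S : Fin N → Finset (Fin n)) (hSinj : Function.Injective S)
    (hSne : ∀ i, (S i).Nonempty)
    (μ lam : ℝ) (hμ : μ ≠ 0) (hlam : 0 < lam) :
    ∀ φ : Fin N → ℝ,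
      Submodule.span ℝ ((fun W : VF N => W φ) ''
        (⋂₀ {G : Set (VF N) |
          (∀ W ∈ G, ContDiff ℝ (⊤ : ℕ∞) W) ∧
          DfieldGen0 lam μ S ∈ G ∧ (∀ j : Fin n, DfieldJ μ S j ∈ G) ∧
          (∀ V ∈ G, ∀ W ∈ G, V + W ∈ G) ∧
          (∀ (a : ℝ), ∀ V ∈ G, a • V ∈ G) ∧
          (∀ V ∈ G, ∀ W ∈ G, lieBracket V W ∈ G)})) = ⊤ :=
  hormander_condition_general_case_general n N S hSinj hSne μ lam hμ hlam

end
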